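/- arXiv:2603.17154 — 2 statements merged into one kernel-verified Lean document; each statement's English description precedes it below -/
import Mathlib

section
/- Let q be a prime power, let G ∈ F_q^{k×n} be a matrix of rank k, and let s_1, s_2 ≥ 1 with s_1 + s_2 = k. Then E_1(G) + E_2(G) ≥ n·(2H_n − H_{n−k} − H_{n−min(s_1,s_2)}). -/
open Finset

/-- The `r`-th harmonic number `H_r = ∑_{i=1}^r 1/i`, as a real number (`H_0 = 0`). -/
noncomputable def harm (r : ℕ) : ℝ := ∑ i ∈ Finset.range r, (1 : ℝ) / (i + 1)

/-- The span of the columns of `G` indexed by the subset `S ⊆ {1,…,n}`. -/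
noncomputable def colSpan (F : Type*) [Field F] {k n : ℕ}
    (G : Matrix (Fin k) (Fin n) F) (S : Finset (Fin n)) : Submodule F (Fin k → F) :=
  Submodule.span F ((fun j => fun i => G i j) '' (S : Set (Fin n)))

/-- `α_V(s)`: the number of `s`-element subsets `S ⊆ {1,…,n}` whose columns span a
subspace containing the target subspace `V`. -/
noncomputable def alphaCount (F : Type*) [Field F] {k n : ℕ}
    (G : Matrix (Fin k) (Fin n) F) (V : Submodule F (Fin k → F)) (s : ℕ) : ℕ :=
  Nat.card {S : Finset (Fin n) // S.card = s ∧ V ≤ colSpan F G S}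

/-- The first file subspace `F₁ = span(e_1, …, e_{s₁}) ⊆ F_q^k`. -/
noncomputable def file1 (F : Type*) [Field F] (k s1 : ℕ) : Submodule F (Fin k → F) :=
  Submodule.span F {v : Fin k → F | ∃ i : Fin k, (i : ℕ) < s1 ∧ v = Pi.single i 1}

/-- The second file subspace `F₂ = span(e_{s₁+1}, …, e_k) ⊆ F_q^k`. -/
noncomputable def file2 (F : Type*) [Field F] (k s1 : ℕ) : Submodule F (Fin k → F) :=
  Submodule.span F {v : Fin k → F | ∃ i : Fin k, s1 ≤ (i : ℕ) ∧ v = Pi.single i 1}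

/-- The expected retrieval time `E(G, V) = n·H_n − ∑_{s=1}^{n−1} α_V(s)/C(n−1,s)`. -/
noncomputable def Etime (F : Type*) [Field F] {k n : ℕ}
    (G : Matrix (Fin k) (Fin n) F) (V : Submodule F (Fin k → F)) : ℝ :=
  (n : ℝ) * harm n -
    ∑ s ∈ Finset.Icc 1 (n - 1), (alphaCount F G V s : ℝ) / ((n - 1).choose s : ℝ)

/-! An `s`-set of columns whose span contains a file has `s` at least the dimension of the file,
and, since `F₁ ⊔ F₂` is the whole space, no `s`-set with `s < k` spans both files. Hence
`α_{F₁}(s) + α_{F₂}(s) ≤ ([k ≤ s] + [min(s₁, s₂) ≤ s]) · C(n, s)`, and as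
`C(n, s) / C(n - 1, s) = n / (n - s)`, summing this ratio over `t ≤ s ≤ n - 1` gives
`n · H_{n-t}`. -/

theorem harm_sub_eq_sum_Ico (t n : ℕ) :
    harm (n - t) = ∑ s ∈ Ico t n, (1 : ℝ) / ((n - s : ℕ) : ℝ) := by
  rw [harm, sum_Ico_eq_sum_range, ← sum_range_reflect]
  refine sum_congr rfl fun j hj => ?_
  have hj : j < n - t := mem_range.mp hj
  rw [show n - (t + j) = n - t - 1 - j + 1 by omega]
  push_cast
  rfl

theorem choose_div_choose_pred {n s : ℕ} (hs : s < n) :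
    (n.choose s : ℝ) / ((n - 1).choose s : ℝ) = n / ((n - s : ℕ) : ℝ) := by
  obtain ⟨m, rfl⟩ : ∃ m, n = m + 1 := ⟨n - 1, by omega⟩
  have hpos : (0 : ℝ) < (m.choose s : ℝ) := by exact_mod_cast Nat.choose_pos (by omega)
  have hsub : (0 : ℝ) < ((m + 1 - s : ℕ) : ℝ) := by exact_mod_cast (by omega : 0 < m + 1 - s)
  rw [Nat.add_sub_cancel, div_eq_div_iff hpos.ne' hsub.ne']
  exact_mod_cast (Nat.choose_mul_succ_eq m s).symm.trans (mul_comm _ _)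

theorem sum_Icc_ite_choose_div_choose_pred {t : ℕ} (ht : 1 ≤ t) (n : ℕ) :
    ∑ s ∈ Icc 1 (n - 1), ((if t ≤ s then n.choose s else 0 : ℕ) : ℝ) / ((n - 1).choose s : ℝ)
      = n * harm (n - t) := by
  have hIco : {s ∈ Icc 1 (n - 1) | t ≤ s} = Ico t n := by
    ext s
    simp only [mem_filter, mem_Icc, mem_Ico]
    omega
  simp_rw [apply_ite (Nat.cast : ℕ → ℝ), Nat.cast_zero, ite_div, zero_div]
  rw [← sum_filter, hIco, harm_sub_eq_sum_Ico, mul_sum]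
  refine sum_congr rfl fun s hs => ?_
  rw [choose_div_choose_pred (mem_Ico.mp hs).2, mul_one_div]

section Counting

variable {F : Type*} [Field F] {k n : ℕ} (G : Matrix (Fin k) (Fin n) F)

theorem finrank_le_card_of_le_colSpan {V : Submodule F (Fin k → F)} {S : Finset (Fin n)}
    (hV : V ≤ colSpan F G S) : Module.finrank F V ≤ #S := by
  classical
  refine (Submodule.finrank_mono hV).trans ?_
  rw [colSpan, ← coe_image]
  exact (finrank_span_finset_le_card _).trans card_image_le

open Classical in
theorem alphaCount_eq_card_filter (V : Submodule F (Fin k → F)) (s : ℕ) :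
    alphaCount F G V s = #{S ∈ powersetCard s univ | V ≤ colSpan F G S} := by
  rw [alphaCount, Nat.card_eq_fintype_card, Fintype.card_subtype]
  congr 1
  ext S
  simp

theorem alphaCount_le_choose (V : Submodule F (Fin k → F)) (s : ℕ) :
    alphaCount F G V s ≤ n.choose s := by
  classical
  rw [alphaCount_eq_card_filter]
  exact (card_filter_le _ _).trans (by simp)

theorem alphaCount_eq_zero_of_lt_finrank {V : Submodule F (Fin k → F)} {s : ℕ}
    (hs : s < Module.finrank F V) : alphaCount F G V s = 0 := by
  classical
  rw [alphaCount_eq_card_filter, card_eq_zero, filter_eq_empty_iff]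
  intro S hS hV
  have := finrank_le_card_of_le_colSpan G hV
  rw [mem_powersetCard_univ.mp hS] at this
  omega

theorem alphaCount_add_alphaCount_le_choose {V W : Submodule F (Fin k → F)} (hVW : V ⊔ W = ⊤)
    {s : ℕ} (hs : s < k) : alphaCount F G V s + alphaCount F G W s ≤ n.choose s := by
  classical
  rw [alphaCount_eq_card_filter, alphaCount_eq_card_filter, ← card_union_of_disjoint]
  · exact (card_le_card (union_subset (filter_subset _ _) (filter_subset _ _))).trans (by simp)
  · refine disjoint_filter.mpr fun S hS hV hW => ?_
    have := finrank_le_card_of_le_colSpan G (V := ⊤) (hVW ▸ sup_le hV hW)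
    rw [finrank_top, Module.finrank_fin_fun, mem_powersetCard_univ.mp hS] at this
    omega

end Counting

theorem finrank_span_single_one (F : Type*) [Field F] {ι : Type*} [Fintype ι] [DecidableEq ι]
    (p : ι → Prop) [DecidablePred p] :
    Module.finrank F (Submodule.span F {v : ι → F | ∃ i, p i ∧ v = Pi.single i 1}) =
      #{i | p i} := by
  have hrange : {v : ι → F | ∃ i, p i ∧ v = Pi.single i 1} =
      Set.range (Pi.basisFun F ι ∘ (Subtype.val : {i // p i} → ι)) := by
    ext v
    simp [eq_comm]
  rw [hrange, finrank_span_eq_card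
    ((Pi.basisFun F ι).linearIndependent.comp _ Subtype.val_injective), Fintype.card_subtype]

section Files

variable (F : Type*) [Field F]

theorem finrank_file1 {k s1 : ℕ} (h : s1 ≤ k) :
    Module.finrank F (file1 F k s1) = s1 := by
  rw [file1, finrank_span_single_one, Fin.card_filter_val_lt, min_eq_right h]

theorem finrank_file2 (k s1 : ℕ) :
    Module.finrank F (file2 F k s1) = k - s1 := by
  have hcard := card_filter_add_card_filter_not (s := (univ : Finset (Fin k)))
    (fun i : Fin k => (i : ℕ) < s1)
  simp only [not_lt, card_univ, Fintype.card_fin, Fin.card_filter_val_lt] at hcard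
  rw [file2, finrank_span_single_one]
  omega

theorem file1_sup_file2 (k s1 : ℕ) : file1 F k s1 ⊔ file2 F k s1 = ⊤ := by
  rw [file1, file2, ← Submodule.span_union, eq_top_iff, ← (Pi.basisFun F (Fin k)).span_eq]
  refine Submodule.span_mono ?_
  rintro v ⟨i, rfl⟩
  by_cases hi : (i : ℕ) < s1
  · exact Or.inl ⟨i, hi, by simp⟩
  · exact Or.inr ⟨i, by omega, by simp⟩

end Files

theorem alphaCount_file1_add_file2_le {F : Type*} [Field F] {k n s1 s2 : ℕ}
    (G : Matrix (Fin k) (Fin n) F) (hk : s1 + s2 = k) (s : ℕ) :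
    alphaCount F G (file1 F k s1) s + alphaCount F G (file2 F k s1) s ≤
      (if k ≤ s then n.choose s else 0) + (if min s1 s2 ≤ s then n.choose s else 0) := by
  have hrank1 := finrank_file1 F (show s1 ≤ k by omega)
  have hrank2 := finrank_file2 F k s1
  by_cases hks : k ≤ s
  · rw [if_pos hks, if_pos (by omega)]
    exact add_le_add (alphaCount_le_choose G _ s) (alphaCount_le_choose G _ s)
  by_cases hms : min s1 s2 ≤ s
  · rw [if_neg hks, if_pos hms, zero_add]
    exact alphaCount_add_alphaCount_le_choose G (file1_sup_file2 F k s1) (by omega)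
  · rw [if_neg hks, if_neg hms, alphaCount_eq_zero_of_lt_finrank G (by omega),
      alphaCount_eq_zero_of_lt_finrank G (by omega)]

theorem stmt1_general (k n s1 s2 : ℕ)
    (F : Type*) [Field F]
    (G : Matrix (Fin k) (Fin n) F)
    (hs1 : 1 ≤ s1) (hs2 : 1 ≤ s2) (hk : s1 + s2 = k) :
    Etime F G (file1 F k s1) + Etime F G (file2 F k s1) ≥
      (n : ℝ) * (2 * harm n - harm (n - k) - harm (n - min s1 s2)) := by
  have hbound : ∑ s ∈ Icc 1 (n - 1),
      ((alphaCount F G (file1 F k s1) s : ℝ) + alphaCount F G (file2 F k s1) s) /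
        ((n - 1).choose s : ℝ) ≤
      ∑ s ∈ Icc 1 (n - 1),
        (((if k ≤ s then n.choose s else 0 : ℕ) : ℝ) / ((n - 1).choose s : ℝ) +
          ((if min s1 s2 ≤ s then n.choose s else 0 : ℕ) : ℝ) / ((n - 1).choose s : ℝ)) := by
    refine sum_le_sum fun s _ => ?_
    rw [← add_div]
    exact div_le_div_of_nonneg_right (mod_cast alphaCount_file1_add_file2_le G hk s)
      (Nat.cast_nonneg _)
  rw [sum_add_distrib, sum_Icc_ite_choose_div_choose_pred (by omega),
    sum_Icc_ite_choose_div_choose_pred (le_min hs1 hs2)] at hbound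
  simp only [add_div, sum_add_distrib] at hbound
  unfold Etime
  linarith

/-- For any rank-`k` code `G` and partition `s₁ + s₂ = k` with `s₁, s₂ ≥ 1`,
`E₁(G) + E₂(G) ≥ n·(2H_n − H_{n−k} − H_{n−min(s₁,s₂)})`. -/
theorem stmt1 (q k n s1 s2 : ℕ) (hq : IsPrimePow q)
    (F : Type*) [Field F] [Fintype F] (hF : Fintype.card F = q)
    (G : Matrix (Fin k) (Fin n) F) (hrank : G.rank = k)
    (hs1 : 1 ≤ s1) (hs2 : 1 ≤ s2) (hk : s1 + s2 = k) :
    Etime F G (file1 F k s1) + Etime F G (file2 F k s1) ≥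
      (n : ℝ) * (2 * harm n - harm (n - k) - harm (n - min s1 s2)) :=
  stmt1_general k n s1 s2 F G hs1 hs2 hk
end

section
/- Let q be a prime power, let 2 ≤ k ≤ n, let s_1 = 1 and s_2 = k−1, and let G = [I_k | P] ∈ F_q^{k×n} be a systematic matrix in which every k columns are linearly independent (a systematic [n,k] MDS code). Then E_1(G) = k, independently of n. Equivalently, n·(H_n − H_{n−k}) − Σ_{s=1}^{k−1} s/(n−s) = k. -/
open Finset

/-! For a systematic MDS code, `e₁` is the first column of `G` and any at most `k` columns are
linearly independent, so `s` columns span `e₁` exactly when `s ≥ k` or they include the first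
column. Hence `α(s) = C(n,s) − [s < k]·C(n-1,s)`, and as `C(n,s)/C(n-1,s) = n/(n-s)`, the
summands of `E₁` are `n/(n-s) − [s < k]`. Since `∑_{s=1}^{m-1} n/(n-s) = n(H_n − H_{n-m}) − 1`,
this leaves `E₁ = k`; the harmonic identity follows the same way from `s/(n-s) = n/(n-s) − 1`. -/

open Matrix

section

variable {F : Type*} [Field F] {k n : ℕ}

def Matrix.IsMDS (G : Matrix (Fin k) (Fin n) F) : Prop :=
  ∀ S : Finset (Fin n), #S = k → LinearIndepOn F Gᵀ (S : Set (Fin n))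

namespace Matrix.IsMDS

variable {G : Matrix (Fin k) (Fin n) F}

lemma linearIndepOn_of_card_le (hG : G.IsMDS) (hkn : k ≤ n) {T : Finset (Fin n)}
    (hT : #T ≤ k) : LinearIndepOn F Gᵀ (T : Set (Fin n)) := by
  obtain ⟨U, hTU, -, hU⟩ :=
    exists_subsuperset_card_eq (subset_univ T) hT (by simpa using hkn)
  exact (hG U hU).mono (by exact_mod_cast hTU)

lemma colSpan_eq_top (hG : G.IsMDS) {S : Finset (Fin n)} (hS : k ≤ #S) :
    colSpan F G S = ⊤ := by
  obtain ⟨T, hTS, hT⟩ := S.exists_subset_card_eq hS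
  have hspan := (hG T hT).linearIndependent.span_eq_top_of_card_eq_finrank' (by simp [hT])
  rw [eq_top_iff, ← hspan]
  exact Submodule.span_mono (by rintro _ ⟨j, rfl⟩; exact ⟨j, hTS j.2, rfl⟩)

lemma col_mem_colSpan_iff (hG : G.IsMDS) (hkn : k ≤ n) {S : Finset (Fin n)}
    (hS : #S < k) (j : Fin n) : Gᵀ j ∈ colSpan F G S ↔ j ∈ S := by
  refine ⟨fun hj => by_contra fun hjS => ?_, fun hjS => Submodule.subset_span ⟨j, hjS, rfl⟩⟩
  have hli := hG.linearIndepOn_of_card_le hkn ((card_insert_le j S).trans hS)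
  rw [coe_insert] at hli
  exact hli.notMem_span_of_insert hjS hj

end Matrix.IsMDS

lemma transpose_castLE_eq_single {G : Matrix (Fin k) (Fin n) F} (hkn : k ≤ n)
    (hsys : ∀ (i : Fin k) (j : Fin n), (j : ℕ) < k →
      G i j = if (i : ℕ) = (j : ℕ) then 1 else 0) (i : Fin k) :
    Gᵀ (Fin.castLE hkn i) = Pi.single i 1 := by
  ext i'
  simp [hsys i' (Fin.castLE hkn i) i.isLt, Pi.single_apply, Fin.ext_iff]

lemma file1_one_eq_span_single (hk : 0 < k) :
    file1 F k 1 = F ∙ Pi.single (⟨0, hk⟩ : Fin k) (1 : F) := by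
  rw [file1]
  congr 1
  ext v
  constructor
  · rintro ⟨i, hi, rfl⟩
    obtain rfl : i = ⟨0, hk⟩ := Fin.ext (Nat.lt_one_iff.mp hi)
    rfl
  · rintro rfl
    exact ⟨_, Nat.zero_lt_one, rfl⟩

lemma card_powersetCard_filter_notMem {α : Type*} [Fintype α] [DecidableEq α] (a : α)
    (s : ℕ) : #{S ∈ powersetCard s (univ : Finset α) | a ∉ S} =
      (Fintype.card α - 1).choose s := by
  have hfilter :
      {S ∈ powersetCard s (univ : Finset α) | a ∉ S} = powersetCard s (univ.erase a) := by
    ext S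
    simp [mem_powersetCard, subset_erase, and_comm]
  rw [hfilter, card_powersetCard, card_erase_of_mem (mem_univ a), card_univ]

lemma cast_choose_div_choose_sub_one {n s : ℕ} (hs : s < n) :
    (n.choose s : ℝ) / (n - 1).choose s = n / (n - s) := by
  have hchoose := Nat.choose_mul_succ_eq (n - 1) s
  rw [Nat.sub_add_cancel (by omega)] at hchoose
  have hpos : (0 : ℝ) < (n - 1).choose s := by exact_mod_cast Nat.choose_pos (by omega)
  have hns : (0 : ℝ) < n - s := sub_pos.mpr (by exact_mod_cast hs)
  rw [div_eq_div_iff hpos.ne' hns.ne']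
  have hcast := congrArg (Nat.cast : ℕ → ℝ) hchoose
  push_cast [Nat.cast_sub hs.le] at hcast
  linear_combination -hcast

lemma harm_sub_harm_sub {m n : ℕ} (hmn : m ≤ n) :
    harm n - harm (n - m) = ∑ s ∈ range m, 1 / ((n : ℝ) - s) := by
  induction m with
  | zero => simp
  | succ m ih =>
    have hstep : harm (n - m) = harm (n - (m + 1)) + 1 / ((n : ℝ) - m) := by
      rw [show n - m = n - (m + 1) + 1 by omega, harm, harm, sum_range_succ,
        Nat.cast_sub hmn]
      push_cast
      ring_nf
    rw [sum_range_succ, ← ih (by omega), hstep]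
    ring

lemma sum_Ico_one_div_sub {m n : ℕ} (hm : 1 ≤ m) (hmn : m ≤ n) :
    ∑ s ∈ Ico 1 m, (n : ℝ) / (n - s) = n * (harm n - harm (n - m)) - 1 := by
  have hn : (n : ℝ) ≠ 0 := Nat.cast_ne_zero.mpr (by omega)
  rw [harm_sub_harm_sub hmn, sum_range_eq_add_Ico _ hm, mul_add, mul_sum]
  simp [hn, div_eq_mul_one_div (n : ℝ)]

section SystematicMDS

variable {G : Matrix (Fin k) (Fin n) F} (hG : G.IsMDS) (hkn : k ≤ n)
  (hsys : ∀ (i : Fin k) (j : Fin n), (j : ℕ) < k →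
      G i j = if (i : ℕ) = (j : ℕ) then 1 else 0)
include hG hkn hsys

lemma file1_one_le_colSpan_iff (hk : 0 < k) (S : Finset (Fin n)) :
    file1 F k 1 ≤ colSpan F G S ↔ k ≤ #S ∨ (⟨0, hk.trans_le hkn⟩ : Fin n) ∈ S := by
  rcases le_or_gt k #S with hS | hS
  · simp [hG.colSpan_eq_top hS, hS]
  · rw [file1_one_eq_span_single hk, Submodule.span_singleton_le_iff_mem,
      ← transpose_castLE_eq_single hkn hsys, hG.col_mem_colSpan_iff hkn hS]
    simp [hS.not_ge]

lemma alphaCount_file1_one_add (hk : 0 < k) (s : ℕ) :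
    alphaCount F G (file1 F k 1) s + (if s < k then (n - 1).choose s else 0) = n.choose s := by
  classical
  have hgood : alphaCount F G (file1 F k 1) s =
      #{S ∈ powersetCard s univ | file1 F k 1 ≤ colSpan F G S} := by
    rw [alphaCount, Nat.card_eq_fintype_card, Fintype.card_subtype]
    congr 1
    ext S
    simp
  have hbad : #{S ∈ powersetCard s univ | ¬ file1 F k 1 ≤ colSpan F G S} =
      if s < k then (n - 1).choose s else 0 := by
    split_ifs with hs
    · calc _ = #{S ∈ powersetCard s univ | (⟨0, hk.trans_le hkn⟩ : Fin n) ∉ S} := by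
            refine congrArg card (filter_congr fun S hS => ?_)
            rw [mem_powersetCard_univ] at hS
            simp [file1_one_le_colSpan_iff hG hkn hsys hk, hS, hs]
        _ = (n - 1).choose s := by rw [card_powersetCard_filter_notMem, Fintype.card_fin]
    · rw [card_eq_zero, filter_eq_empty_iff]
      intro S hS
      rw [mem_powersetCard_univ] at hS
      simp [file1_one_le_colSpan_iff hG hkn hsys hk, hS, not_lt.mp hs]
  rw [hgood, ← hbad, card_filter_add_card_filter_not, card_powersetCard, card_univ,
    Fintype.card_fin]

lemma alphaCount_file1_one_div_choose (hk : 0 < k) {s : ℕ} (hs : s < n) :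
    (alphaCount F G (file1 F k 1) s : ℝ) / (n - 1).choose s =
      n / (n - s) - if s < k then 1 else 0 := by
  have hcount := congrArg (Nat.cast : ℕ → ℝ) (alphaCount_file1_one_add hG hkn hsys hk s)
  have hpos : (0 : ℝ) < (n - 1).choose s := by exact_mod_cast Nat.choose_pos (by omega)
  rw [← cast_choose_div_choose_sub_one hs, ← hcount]
  split_ifs <;> push_cast <;> field_simp <;> ring

lemma Etime_file1_one (hk : 0 < k) : Etime F G (file1 F k 1) = k := by
  have hn : 0 < n := hk.trans_le hkn
  have hsum : ∑ s ∈ Ico 1 n, (alphaCount F G (file1 F k 1) s : ℝ) / (n - 1).choose s =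
      n * harm n - 1 - (k - 1) := by
    rw [sum_congr rfl fun s hs =>
        alphaCount_file1_one_div_choose hG hkn hsys hk (mem_Ico.mp hs).2,
      sum_sub_distrib, sum_Ico_one_div_sub hn le_rfl, sum_boole, Ico_filter_lt,
      min_eq_right hkn, Nat.card_Ico, Nat.cast_sub hk, Nat.sub_self]
    simp [harm]
  rw [Etime, Icc_sub_one_right_eq_Ico_of_not_isMin (by simpa using hn.ne'), hsum]
  ring

end SystematicMDS

lemma mul_harm_sub_sub_sum_div_sub {k n : ℕ} (hk : 1 ≤ k) (hkn : k ≤ n) :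
    (n : ℝ) * (harm n - harm (n - k)) - ∑ s ∈ Icc 1 (k - 1), (s : ℝ) / (n - s) = k := by
  have hterm : ∀ s ∈ Ico 1 k, (s : ℝ) / (n - s) = n / (n - s) - 1 := fun s hs => by
    have hsn : (s : ℝ) < n := by exact_mod_cast (mem_Ico.mp hs).2.trans_le hkn
    field_simp [(sub_pos.mpr hsn).ne']
    ring
  rw [Icc_sub_one_right_eq_Ico_of_not_isMin (by simpa using (by omega : k ≠ 0)),
    sum_congr rfl hterm, sum_sub_distrib, sum_Ico_one_div_sub hk hkn]
  simp [Nat.cast_sub hk]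

end

theorem stmt16_general (k n : ℕ)
    (F : Type*) [Field F]
    (hk2 : 2 ≤ k) (hkn : k ≤ n)
    (G : Matrix (Fin k) (Fin n) F)
    (hsys : ∀ (i : Fin k) (j : Fin n), (j : ℕ) < k →
      G i j = if (i : ℕ) = (j : ℕ) then 1 else 0)
    (hMDS : ∀ S : Finset (Fin n), S.card = k →
      LinearIndependent F (fun j : {x : Fin n // x ∈ S} => fun i => G i j.1)) :
    Etime F G (file1 F k 1) = (k : ℝ) ∧
      (n : ℝ) * (harm n - harm (n - k)) -
          ∑ s ∈ Finset.Icc 1 (k - 1), (s : ℝ) / ((n : ℝ) - (s : ℝ)) =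
        (k : ℝ) :=
  ⟨Etime_file1_one hMDS hkn hsys (by omega), mul_harm_sub_sub_sum_div_sub (by omega) hkn⟩

/-- For a systematic `[n,k]` MDS code with `s₁ = 1`, the single-symbol file satisfies
`E₁(G) = k` independently of `n`; equivalently
`n·(H_n − H_{n−k}) − ∑_{s=1}^{k−1} s/(n−s) = k`. -/
theorem stmt16 (q k n : ℕ) (hq : IsPrimePow q)
    (F : Type*) [Field F] [Fintype F] (hF : Fintype.card F = q)
    (hk2 : 2 ≤ k) (hkn : k ≤ n)
    (G : Matrix (Fin k) (Fin n) F)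
    (hsys : ∀ (i : Fin k) (j : Fin n), (j : ℕ) < k →
      G i j = if (i : ℕ) = (j : ℕ) then 1 else 0)
    (hMDS : ∀ S : Finset (Fin n), S.card = k →
      LinearIndependent F (fun j : {x : Fin n // x ∈ S} => fun i => G i j.1)) :
    Etime F G (file1 F k 1) = (k : ℝ) ∧
      (n : ℝ) * (harm n - harm (n - k)) -
          ∑ s ∈ Finset.Icc 1 (k - 1), (s : ℝ) / ((n : ℝ) - (s : ℝ)) =
        (k : ℝ) :=
  stmt16_general k n F hk2 hkn G hsys hMDS
end
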